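/- Let T be a finitary monad on Set such that finitely generated T-algebras are closed under kernel pairs, and let F : Set^T ⥤ Set^T be a finitary endofunctor preserving surjective T-algebra morphisms that maps kernel pairs of T-algebra morphisms to weak pullbacks in Set. Then F is proper: whenever c : TX → F(TX), d : TY → F(TY) with X, Y finite and x ∈ X, y ∈ Y satisfy that η_X(x) and η_Y(y) have equal images in the final coalgebra, there is a zig-zag of coalgebra morphisms between coalgebras with free finitely generated carriers relating η_X(x) and η_Y(y). -/

import Mathlib

/-!
Glue `c` and `d` into one coalgebra on `T(X ⊕ Y)`; by finality the generators `inl x` and `inr y`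
have the same image under the unique coalgebra morphism `h` into `νF`. Corestrict `h` to its
image `e : T(X ⊕ Y) ↠ B`: now `B` is finitely generated, so the kernel pair `K` of `e` (which is
also the kernel pair of `h`) is finitely generated, and it contains `(inl x, inr y)`. Cover `K`
by a free algebra `TW` with `W` finite. Because `F` sends the kernel pair of `h` to a weak
pullback, the pair of `F`-behaviours of each generator of `TW` comes from an element of `F K`,
which lifts to `F(TW)` since `F` preserves surjections. This defines a coalgebra on `TW` for which
both projections `TW → T(X ⊕ Y)` are coalgebra morphisms, giving the zig-zag
`TX → T(X ⊕ Y) ← TW → T(X ⊕ Y) ← TY`.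
-/

open CategoryTheory CategoryTheory.Limits

/-- A `T`-algebra is finitely generated: a surjective quotient of a free algebra on a
finite set. -/
def IsFG (T : Monad (Type)) (A : T.Algebra) : Prop :=
  ∃ X : Type, Finite X ∧ ∃ q : T.free.obj X ⟶ A, Function.Surjective q.f

/-- An `F`-coalgebra has free finitely generated carrier. -/
def Pffg (T : Monad (Type)) (F : T.Algebra ⥤ T.Algebra)
    (C : Endofunctor.Coalgebra F) : Prop :=
  ∃ X : Type, Finite X ∧ Nonempty (C.V ≅ T.free.obj X)

/-- The coalgebra on a free finitely generated carrier as an object of the full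
subcategory. -/
def ffgObj (T : Monad (Type)) (F : T.Algebra ⥤ T.Algebra) (X : Type) (hX : Finite X)
    (c : T.free.obj X ⟶ F.obj (T.free.obj X)) : ObjectProperty.FullSubcategory (Pffg T F) :=
  ⟨⟨T.free.obj X, c⟩, X, hX, ⟨Iso.refl _⟩⟩

/-- Zig-zag relatedness of elements of coalgebras with free finitely generated
carrier. -/
def ZigzagRel (T : Monad (Type)) (F : T.Algebra ⥤ T.Algebra) :
    (Σ C : ObjectProperty.FullSubcategory (Pffg T F), C.obj.V.A) →
      (Σ C : ObjectProperty.FullSubcategory (Pffg T F), C.obj.V.A) → Prop :=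
  Relation.EqvGen (fun p q => ∃ m : p.1 ⟶ q.1, m.hom.f.f p.2 = q.2)

lemma CategoryTheory.Functor.map_surjective_of_surjective.{u, v} (G : Type u ⥤ Type v)
    {X Y : Type u} {f : X ⟶ Y} (hf : Function.Surjective f) : Function.Surjective (G.map f) := by
  have : IsSplitEpi f := (isSplitEpi_iff_surjective f).2 hf
  exact (epi_iff_surjective _).1 inferInstance

namespace CategoryTheory.Monad

def Algebra.ofMono {C : Type*} [Category C] {T : Monad C} (N : T.Algebra) {S : C} (i : S ⟶ N.A)
    [Mono i] (a : T.obj S ⟶ S) (ha : a ≫ i = T.map i ≫ N.a) : T.Algebra where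
  A := S
  a := a
  unit := by
    rw [← cancel_mono i, Category.assoc, ha, ← T.η.naturality_assoc, N.unit]
    simp
  assoc := by
    rw [← cancel_mono i, Category.assoc, Category.assoc, ha, ← T.μ.naturality_assoc, N.assoc,
      Functor.comp_map, ← Functor.map_comp_assoc, ← ha, Functor.map_comp_assoc, ha]

variable {T : Monad (Type)}

lemma Algebra.congr_f_apply {A B : T.Algebra} {f g : A ⟶ B} (h : f = g) (a : A.A) :
    f.f a = g.f a := by
  rw [h]

lemma map_comp_f_apply (F : T.Algebra ⥤ T.Algebra) {A B C : T.Algebra} (f : A ⟶ B) (g : B ⟶ C)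
    (x : (F.obj A).A) : (F.map (f ≫ g)).f x = (F.map g).f ((F.map f).f x) :=
  Algebra.congr_f_apply (F.map_comp f g) x

def freeLift {Z : Type} {B : T.Algebra} (g : Z → B.A) : T.free.obj Z ⟶ B :=
  (T.adj.homEquiv Z B).symm (TypeCat.ofHom g)

lemma freeLift_f_η {Z : Type} {B : T.Algebra} (g : Z → B.A) (z : Z) :
    (freeLift g).f (T.η.app Z z) = g z :=
  ConcreteCategory.congr_hom ((T.adj.homEquiv Z B).apply_symm_apply (TypeCat.ofHom g)) z

lemma free_hom_ext {Z : Type} {B : T.Algebra} {f₁ f₂ : T.free.obj Z ⟶ B}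
    (h : ∀ z, f₁.f (T.η.app Z z) = f₂.f (T.η.app Z z)) : f₁ = f₂ :=
  (T.adj.homEquiv Z B).injective (ConcreteCategory.hom_ext _ _ h)

lemma free_map_f_η {X Y : Type} (f : X ⟶ Y) (x : X) :
    (T.free.map f).f (T.η.app X x) = T.η.app Y (f x) :=
  (ConcreteCategory.congr_hom (T.η.naturality f) x).symm

namespace Algebra

variable {A N : T.Algebra} (h : A ⟶ N)

lemma map_val_map_rangeFactorization (t : T.obj A.A) :
    T.map (TypeCat.ofHom Subtype.val) (T.map (TypeCat.ofHom (Set.rangeFactorization h.f)) t) =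
      T.map h.f t := by
  rw [← types_comp_apply (T.map _) (T.map _), ← Functor.map_comp]
  rfl

lemma map_f_mem_range (t : T.obj (Set.range h.f)) :
    N.a (T.map (TypeCat.ofHom Subtype.val) t) ∈ Set.range h.f := by
  obtain ⟨t, rfl⟩ := (T : Type ⥤ Type).map_surjective_of_surjective
    (f := TypeCat.ofHom (Set.rangeFactorization h.f)) Set.rangeFactorization_surjective t
  rw [map_val_map_rangeFactorization]
  exact ⟨A.a t, (ConcreteCategory.congr_hom h.h t).symm⟩

def range : T.Algebra :=
  have : Mono (TypeCat.ofHom (Subtype.val : Set.range h.f → N.A)) :=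
    (mono_iff_injective _).2 Subtype.val_injective
  ofMono N (TypeCat.ofHom (Subtype.val : Set.range h.f → N.A))
    (TypeCat.ofHom fun t => ⟨_, map_f_mem_range h t⟩) rfl

def toRange : A ⟶ range h where
  f := TypeCat.ofHom (Set.rangeFactorization h.f)
  h := by
    ext t
    apply Subtype.ext
    exact (congrArg N.a (map_val_map_rangeFactorization h t)).trans
      (ConcreteCategory.congr_hom h.h t)

lemma toRange_surjective : Function.Surjective (toRange h).f :=
  Set.rangeFactorization_surjective

lemma toRange_f_eq_iff {a b : A.A} : (toRange h).f a = (toRange h).f b ↔ h.f a = h.f b :=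
  Subtype.ext_iff

end Algebra

lemma exists_pullback_fst_snd {A B C : T.Algebra} (f : A ⟶ C) (g : B ⟶ C) [HasPullback f g]
    {a : A.A} {b : B.A} (hab : f.f a = g.f b) :
    ∃ k : (pullback f g).A, (pullback.fst f g).f k = a ∧ (pullback.snd f g).f k = b := by
  have w : freeLift (fun _ : PUnit => a) ≫ f = freeLift (fun _ => b) ≫ g :=
    free_hom_ext fun _ => by
      change f.f ((freeLift _).f _) = g.f ((freeLift _).f _)
      rwa [freeLift_f_η, freeLift_f_η]
  refine ⟨(pullback.lift _ _ w).f (T.η.app PUnit PUnit.unit), ?_, ?_⟩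
  · exact (Algebra.congr_f_apply (pullback.lift_fst _ _ w) _).trans (freeLift_f_η _ _)
  · exact (Algebra.congr_f_apply (pullback.lift_snd _ _ w) _).trans (freeLift_f_η _ _)

end CategoryTheory.Monad

lemma isFG_free (T : Monad (Type)) (X : Type) [Finite X] : IsFG T (T.free.obj X) :=
  ⟨X, inferInstance, 𝟙 _, Function.surjective_id⟩

lemma IsFG.of_surjective {T : Monad (Type)} {A B : T.Algebra} (hA : IsFG T A) (e : A ⟶ B)
    (he : Function.Surjective e.f) : IsFG T B := by
  obtain ⟨X, hX, q, hq⟩ := hA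
  exact ⟨X, hX, q ≫ e, he.comp hq⟩

def PreservesSurjections {T : Monad (Type)} (F : T.Algebra ⥤ T.Algebra) : Prop :=
  ∀ {A B : T.Algebra} (f : A ⟶ B), Function.Surjective f.f → Function.Surjective (F.map f).f

def FGClosedUnderKernelPairs (T : Monad (Type)) [HasPullbacks T.Algebra] : Prop :=
  ∀ {A B : T.Algebra} (f : A ⟶ B), IsFG T A → IsFG T B → IsFG T (pullback f f)

def MapsKernelPairsToWeakPullbacks {T : Monad (Type)} [HasPullbacks T.Algebra]
    (F : T.Algebra ⥤ T.Algebra) : Prop :=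
  ∀ {A B : T.Algebra} (f : A ⟶ B) (a b : (F.obj A).A), (F.map f).f a = (F.map f).f b →
    ∃ k : (F.obj (pullback f f)).A,
      (F.map (pullback.fst f f)).f k = a ∧ (F.map (pullback.snd f f)).f k = b

namespace CategoryTheory.Monad

variable {T : Monad (Type)} {F : T.Algebra ⥤ T.Algebra}

lemma exists_str_on_free_cover {W : Type} {P A : T.Algebra} (q : T.free.obj W ⟶ P)
    (hq : Function.Surjective (F.map q).f) (p₁ p₂ : P ⟶ A) (γ : A ⟶ F.obj A)
    (hlift : ∀ k : P.A, ∃ l : (F.obj P).A,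
      (F.map p₁).f l = γ.f (p₁.f k) ∧ (F.map p₂).f l = γ.f (p₂.f k)) :
    ∃ σ : T.free.obj W ⟶ F.obj (T.free.obj W),
      σ ≫ F.map (q ≫ p₁) = (q ≫ p₁) ≫ γ ∧ σ ≫ F.map (q ≫ p₂) = (q ≫ p₂) ≫ γ := by
  choose l hl₁ hl₂ using fun w => hlift (q.f (T.η.app W w))
  choose s hs using fun w => hq (l w)
  have comm (p : P ⟶ A) (hp : ∀ w, (F.map p).f (l w) = γ.f (p.f (q.f (T.η.app W w)))) :
      freeLift s ≫ F.map (q ≫ p) = (q ≫ p) ≫ γ :=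
    free_hom_ext fun w => (congrArg _ (freeLift_f_η s w)).trans <|
      (map_comp_f_apply F q p _).trans <| (congrArg _ (hs w)).trans (hp w)
  exact ⟨freeLift s, comm p₁ hl₁, comm p₂ hl₂⟩

section Sum

variable {X Y : Type} (c : T.free.obj X ⟶ F.obj (T.free.obj X))
  (d : T.free.obj Y ⟶ F.obj (T.free.obj Y))

def sumStr : T.free.obj (X ⊕ Y) ⟶ F.obj (T.free.obj (X ⊕ Y)) :=
  freeLift <| Sum.elim
    (fun x => (F.map (T.free.map (TypeCat.ofHom Sum.inl))).f (c.f (T.η.app X x)))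
    (fun y => (F.map (T.free.map (TypeCat.ofHom Sum.inr))).f (d.f (T.η.app Y y)))

def sumInl :
    (⟨T.free.obj X, c⟩ : Endofunctor.Coalgebra F) ⟶ ⟨T.free.obj (X ⊕ Y), sumStr c d⟩ where
  f := T.free.map (TypeCat.ofHom Sum.inl)
  h := free_hom_ext fun x => by
    change _ = (sumStr c d).f ((T.free.map _).f _)
    rw [free_map_f_η, sumStr, freeLift_f_η]
    rfl

def sumInr :
    (⟨T.free.obj Y, d⟩ : Endofunctor.Coalgebra F) ⟶ ⟨T.free.obj (X ⊕ Y), sumStr c d⟩ where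
  f := T.free.map (TypeCat.ofHom Sum.inr)
  h := free_hom_ext fun y => by
    change _ = (sumStr c d).f ((T.free.map _).f _)
    rw [free_map_f_η, sumStr, freeLift_f_η]
    rfl

lemma sumInl_f_η (x : X) : (sumInl c d).f.f (T.η.app X x) = T.η.app (X ⊕ Y) (.inl x) :=
  free_map_f_η _ x

lemma sumInr_f_η (y : Y) : (sumInr c d).f.f (T.η.app Y y) = T.η.app (X ⊕ Y) (.inr y) :=
  free_map_f_η _ y

end Sum

variable [HasPullbacks T.Algebra]

lemma exists_kernelPair_str_lift (hweak : MapsKernelPairsToWeakPullbacks F)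
    {C D : Endofunctor.Coalgebra F} (h : C ⟶ D) {B : T.Algebra} (e : C.V ⟶ B)
    (hker : ∀ a b, e.f a = e.f b ↔ h.f.f a = h.f.f b) (k : (pullback e e).A) :
    ∃ l : (F.obj (pullback e e)).A,
      (F.map (pullback.fst e e)).f l = C.str.f ((pullback.fst e e).f k) ∧
      (F.map (pullback.snd e e)).f l = C.str.f ((pullback.snd e e).f k) := by
  have hstr (a : C.V.A) : (F.map h.f).f (C.str.f a) = D.str.f (h.f.f a) :=
    Algebra.congr_f_apply h.h a
  have hk := (hker _ _).1 (Algebra.congr_f_apply pullback.condition k)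
  obtain ⟨l, hl₁, hl₂⟩ := hweak h.f (C.str.f ((pullback.fst e e).f k))
    (C.str.f ((pullback.snd e e).f k)) ((hstr _).trans ((congrArg D.str.f hk).trans (hstr _).symm))
  have w : pullback.fst h.f h.f ≫ e = pullback.snd h.f h.f ≫ e := by
    ext t
    exact (hker _ _).2 (Algebra.congr_f_apply pullback.condition t)
  refine ⟨(F.map (pullback.lift _ _ w)).f l, ?_, ?_⟩
  · rw [← map_comp_f_apply, pullback.lift_fst, hl₁]
  · rw [← map_comp_f_apply, pullback.lift_snd, hl₂]

theorem exists_free_span_of_hom_eq (hsurj : PreservesSurjections F)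
    (hfg : FGClosedUnderKernelPairs T) (hweak : MapsKernelPairsToWeakPullbacks F)
    {C D : Endofunctor.Coalgebra F} (h : C ⟶ D) (hC : IsFG T C.V) {a b : C.V.A}
    (hab : h.f.f a = h.f.f b) :
    ∃ (W : Type) (_ : Finite W) (σ : T.free.obj W ⟶ F.obj (T.free.obj W))
      (u v : (⟨T.free.obj W, σ⟩ : Endofunctor.Coalgebra F) ⟶ C) (w : T.obj W),
      u.f.f w = a ∧ v.f.f w = b := by
  set e := Algebra.toRange h.f
  have hker (a b : C.V.A) : e.f a = e.f b ↔ h.f.f a = h.f.f b := Algebra.toRange_f_eq_iff h.f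
  obtain ⟨W, hW, q, hq⟩ := hfg e hC (hC.of_surjective e (Algebra.toRange_surjective h.f))
  obtain ⟨k, hk₁, hk₂⟩ := exists_pullback_fst_snd e e ((hker a b).2 hab)
  obtain ⟨w, rfl⟩ := hq k
  obtain ⟨σ, hu, hv⟩ := exists_str_on_free_cover q (hsurj q hq) _ _ C.str
    (exists_kernelPair_str_lift hweak h e hker)
  exact ⟨W, hW, σ, ⟨_, hu⟩, ⟨_, hv⟩, w, hk₁, hk₂⟩

end CategoryTheory.Monad

lemma zigzagRel_equivalence (T : Monad (Type)) (F : T.Algebra ⥤ T.Algebra) :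
    Equivalence (ZigzagRel T F) :=
  Relation.EqvGen.is_equivalence _

lemma zigzagRel_of_hom {T : Monad (Type)} {F : T.Algebra ⥤ T.Algebra}
    {C D : ObjectProperty.FullSubcategory (Pffg T F)} (m : C.obj ⟶ D.obj) {a : C.obj.V.A}
    {b : D.obj.V.A} (hm : m.f.f a = b) : ZigzagRel T F ⟨C, a⟩ ⟨D, b⟩ :=
  .rel _ _ ⟨ObjectProperty.homMk m, hm⟩

open CategoryTheory.Monad in
theorem proper_of_kernelPairs_closed_and_weakPullbacks_general
    (T : Monad (Type))
    (F : T.Algebra ⥤ T.Algebra)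
    (hsurj : ∀ {A B : T.Algebra} (f : A ⟶ B), Function.Surjective f.f →
      Function.Surjective (F.map f).f)
    [HasPullbacks T.Algebra]
    (hfg : ∀ {A B : T.Algebra} (f : A ⟶ B), IsFG T A → IsFG T B →
      IsFG T (pullback f f))
    (hweak : ∀ {A B : T.Algebra} (f : A ⟶ B) (a b : (F.obj A).A),
      (F.map f).f a = (F.map f).f b →
      ∃ k : (F.obj (pullback f f)).A,
        (F.map (pullback.fst f f)).f k = a ∧ (F.map (pullback.snd f f)).f k = b)
    (νF : Endofunctor.Coalgebra F) (hν : IsTerminal νF)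
    (X Y : Type) (hX : Finite X) (hY : Finite Y)
    (c : T.free.obj X ⟶ F.obj (T.free.obj X))
    (d : T.free.obj Y ⟶ F.obj (T.free.obj Y)) (x : X) (y : Y)
    (hbeh : (hν.from ⟨T.free.obj X, c⟩).f.f (T.η.app X x) =
      (hν.from ⟨T.free.obj Y, d⟩).f.f (T.η.app Y y)) :
    ZigzagRel T F ⟨ffgObj T F X hX c, T.η.app X x⟩ ⟨ffgObj T F Y hY d, T.η.app Y y⟩ := by
  let S : Endofunctor.Coalgebra F := ⟨T.free.obj (X ⊕ Y), sumStr c d⟩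
  have hab : (hν.from S).f.f (T.η.app _ (.inl x)) = (hν.from S).f.f (T.η.app _ (.inr y)) := by
    rw [hν.hom_ext (hν.from _) (sumInl c d ≫ hν.from S),
      hν.hom_ext (hν.from ⟨_, d⟩) (sumInr c d ≫ hν.from S)] at hbeh
    rwa [← sumInl_f_η c d x, ← sumInr_f_η c d y]
  obtain ⟨W, hW, σ, u, v, w, hu, hv⟩ :=
    exists_free_span_of_hom_eq hsurj hfg hweak (hν.from S) (isFG_free T (X ⊕ Y)) hab
  let SA := ffgObj T F (X ⊕ Y) inferInstance (sumStr c d)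
  let M := ffgObj T F W hW σ
  have e := zigzagRel_equivalence T F
  exact e.trans (zigzagRel_of_hom (D := SA) (sumInl c d) (sumInl_f_η c d x)) <|
    e.trans (e.symm (zigzagRel_of_hom (C := M) (D := SA) u hu)) <|
    e.trans (zigzagRel_of_hom (C := M) (D := SA) v hv) <|
    e.symm (zigzagRel_of_hom (D := SA) (sumInr c d) (sumInr_f_η c d y))

/-- If finitely generated `T`-algebras are closed under kernel pairs and `F` maps
kernel pairs of `T`-algebra morphisms to weak pullbacks in `Set`, then `F` is proper:
behaviourally equivalent generators of coalgebras with free finitely generated carrier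
are related by a zig-zag of coalgebra morphisms between such coalgebras. -/
theorem proper_of_kernelPairs_closed_and_weakPullbacks
    (T : Monad (Type)) [PreservesFilteredColimits (T : Type ⥤ Type)]
    (F : T.Algebra ⥤ T.Algebra) [PreservesFilteredColimits F]
    (hsurj : ∀ {A B : T.Algebra} (f : A ⟶ B), Function.Surjective f.f →
      Function.Surjective (F.map f).f)
    [HasPullbacks T.Algebra]
    (hfg : ∀ {A B : T.Algebra} (f : A ⟶ B), IsFG T A → IsFG T B →
      IsFG T (pullback f f))
    (hweak : ∀ {A B : T.Algebra} (f : A ⟶ B) (a b : (F.obj A).A),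
      (F.map f).f a = (F.map f).f b →
      ∃ k : (F.obj (pullback f f)).A,
        (F.map (pullback.fst f f)).f k = a ∧ (F.map (pullback.snd f f)).f k = b)
    (νF : Endofunctor.Coalgebra F) (hν : IsTerminal νF)
    (X Y : Type) (hX : Finite X) (hY : Finite Y)
    (c : T.free.obj X ⟶ F.obj (T.free.obj X))
    (d : T.free.obj Y ⟶ F.obj (T.free.obj Y)) (x : X) (y : Y)
    (hbeh : (hν.from ⟨T.free.obj X, c⟩).f.f (T.η.app X x) =
      (hν.from ⟨T.free.obj Y, d⟩).f.f (T.η.app Y y)) :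
    ZigzagRel T F ⟨ffgObj T F X hX c, T.η.app X x⟩ ⟨ffgObj T F Y hY d, T.η.app Y y⟩ :=
  proper_of_kernelPairs_closed_and_weakPullbacks_general T F hsurj hfg hweak νF hν X Y hX hY c d x y
    hbeh
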